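/- Let E be a finite type of edges, P a finite set of paths (each path a finite set of edges), and f(C) = |{p ∈ P : ∃ e ∈ C, e ∈ p}|. Let conf : E → ℝ satisfy conf(e) > 0 for all e, and for a nonempty path p define the Bradley–Terry weight Pr(e | p) = conf(e) / Σ_{e' ∈ p} conf(e'). Define the conditional expected marginal benefit of p given removed set C as Δ(p | C) = Σ_{e ∈ p} Pr(e | p) · (f(C ∪ {e}) − f(C)). Then for all finite edge sets C ⊆ C' and every nonempty path p, Δ(p | C) ≥ Δ(p | C'). -/
import Mathlib


/-- The utility function: the number of paths in `P` (each path a finite set of edges)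
eliminated by removing the edge set `C`. -/
def pathsCovered {E : Type*} [DecidableEq E] (P : Finset (Finset E)) (C : Finset E) : ℕ :=
  (P.filter (fun p => ∃ e ∈ C, e ∈ p)).card

/-- The Bradley–Terry removal probability of edge `e` in the proposed path `p`. -/
noncomputable def btProb {E : Type*} (conf : E → ℝ) (p : Finset E) (e : E) : ℝ :=
  conf e / ∑ e' ∈ p, conf e'

/-- The conditional expected marginal benefit of proposing path `p` given removed set `C`. -/
noncomputable def delta {E : Type*} [DecidableEq E] (P : Finset (Finset E)) (conf : E → ℝ)
    (p : Finset E) (C : Finset E) : ℝ :=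
  ∑ e ∈ p, btProb conf p e *
    ((pathsCovered P (insert e C) : ℝ) - (pathsCovered P C : ℝ))

/-- The number of paths newly covered by adding `e` to `C`. -/
def newCov {E : Type*} [DecidableEq E] (P : Finset (Finset E)) (C : Finset E) (e : E) : ℕ :=
  (P.filter (fun q => e ∈ q ∧ ¬ ∃ e' ∈ C, e' ∈ q)).card

lemma pathsCovered_insert {E : Type*} [DecidableEq E] (P : Finset (Finset E))
    (C : Finset E) (e : E) :
    pathsCovered P (insert e C) = pathsCovered P C + newCov P C e := by
  unfold pathsCovered newCov
  rw [← Finset.card_union_of_disjoint]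
  · congr 1
    ext q
    simp only [Finset.mem_union, Finset.mem_filter, Finset.mem_insert]
    constructor
    · rintro ⟨hq, e', (rfl | h), he'q⟩
      · by_cases hc : ∃ x ∈ C, x ∈ q
        · exact Or.inl ⟨hq, hc⟩
        · exact Or.inr ⟨hq, he'q, hc⟩
      · exact Or.inl ⟨hq, e', h, he'q⟩
    · rintro (⟨hq, e', h, he'q⟩ | ⟨hq, heq, _⟩)
      · exact ⟨hq, e', Or.inr h, he'q⟩
      · exact ⟨hq, e, Or.inl rfl, heq⟩
  · rw [Finset.disjoint_filter]
    rintro q _ hc ⟨_, hnc⟩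
    obtain ⟨x, hx, hxq⟩ := hc
    exact hnc ⟨x, hx, hxq⟩

lemma newCov_anti {E : Type*} [DecidableEq E] (P : Finset (Finset E))
    {C C' : Finset E} (hCC' : C ⊆ C') (e : E) :
    newCov P C' e ≤ newCov P C e := by
  apply Finset.card_le_card
  intro q hq
  simp only [Finset.mem_filter] at hq ⊢
  obtain ⟨hqP, heq, hnc⟩ := hq
  exact ⟨hqP, heq, fun ⟨x, hx, hxq⟩ => hnc ⟨x, hCC' hx, hxq⟩⟩

/-- Adaptive submodularity: for `C ⊆ C'` and every nonempty path `p`,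
`Δ(p | C) ≥ Δ(p | C')`. -/
theorem delta_adaptive_submodular {E : Type*} [Fintype E] [DecidableEq E]
    (P : Finset (Finset E)) (conf : E → ℝ) (hconf : ∀ e, 0 < conf e)
    (C C' : Finset E) (hCC' : C ⊆ C') (p : Finset E) (hp : p.Nonempty) :
    delta P conf p C' ≤ delta P conf p C := by
  unfold delta
  apply Finset.sum_le_sum
  intro e he
  have hb : 0 ≤ btProb conf p e := by
    unfold btProb
    apply div_nonneg (hconf e).le
    exact Finset.sum_nonneg fun x _ => (hconf x).le
  apply mul_le_mul_of_nonneg_left _ hb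
  rw [pathsCovered_insert, pathsCovered_insert]
  push_cast
  ring_nf
  exact_mod_cast newCov_anti P hCC' e
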